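/- arXiv:2112.05921 — 5 statements merged into one kernel-verified Lean document; each statement's English description precedes it below -/
import Mathlib

section
/- (EKF feature update step equals a Gauss-Newton step.) Let Σ ∈ ℝ^{n×n} and R ∈ ℝ^{m×m} be symmetric positive definite, H ∈ ℝ^{m×n}, μ ∈ ℝ^n, and r ∈ ℝ^m (the innovation z − h(μ)). Let S ∈ ℝ^{n×n} and T ∈ ℝ^{m×m} be invertible matrices with SᵀS = Σ⁻¹ and TᵀT = R⁻¹. Define the stacked Jacobian J := [S ; −T·H] ∈ ℝ^{(n+m)×n} (vertical concatenation) and the stacked residual at μ: C := [0 ; T·r] ∈ ℝ^{n+m}. Then JᵀJ is invertible and: (i) (JᵀJ)⁻¹ = Σ − ΣHᵀ(HΣHᵀ + R)⁻¹HΣ; (ii) μ − (JᵀJ)⁻¹JᵀC = μ + ΣHᵀ(HΣHᵀ + R)⁻¹ r. That is, the Gauss-Newton covariance and mean updates coincide with the standard EKF covariance and mean update formulas. -/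
open Matrix

/-- **EKF feature update step equals a Gauss-Newton step.**
With stacked Jacobian `J = [S ; −TH]` and stacked residual `C = [0 ; Tr]`, where
`SᵀS = Σ⁻¹` and `TᵀT = R⁻¹`, the Gauss-Newton covariance `(JᵀJ)⁻¹` and mean
`μ − (JᵀJ)⁻¹JᵀC` coincide with the standard EKF update formulas. -/
theorem ekf_feature_update_is_gauss_newton
    {n m : ℕ}
    (Sig : Matrix (Fin n) (Fin n) ℝ) (R : Matrix (Fin m) (Fin m) ℝ)
    (hSig : Sig.PosDef) (hR : R.PosDef)
    (H : Matrix (Fin m) (Fin n) ℝ) (μ : Fin n → ℝ) (r : Fin m → ℝ)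
    (S : Matrix (Fin n) (Fin n) ℝ) (T : Matrix (Fin m) (Fin m) ℝ)
    (hS : IsUnit S) (hT : IsUnit T)
    (hSS : Sᵀ * S = Sig⁻¹) (hTT : Tᵀ * T = R⁻¹)
    (J : Matrix (Fin n ⊕ Fin m) (Fin n) ℝ)
    (hJ : J = fromRows S (-(T * H)))
    (C : Fin n ⊕ Fin m → ℝ)
    (hC : C = Sum.elim (0 : Fin n → ℝ) (T.mulVec r)) :
    IsUnit (Jᵀ * J) ∧
    (Jᵀ * J)⁻¹ = Sig - Sig * Hᵀ * (H * Sig * Hᵀ + R)⁻¹ * H * Sig ∧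
    μ - ((Jᵀ * J)⁻¹ * Jᵀ).mulVec C
      = μ + (Sig * Hᵀ * (H * Sig * Hᵀ + R)⁻¹).mulVec r := by
  subst hJ hC
  have hSigInvInv : Sig⁻¹⁻¹ = Sig :=
    Sig.nonsing_inv_nonsing_inv ((isUnit_iff_isUnit_det _).1 hSig.isUnit)
  have hRInvInv : R⁻¹⁻¹ = R :=
    R.nonsing_inv_nonsing_inv ((isUnit_iff_isUnit_det _).1 hR.isUnit)
  -- JᵀJ = Σ⁻¹ + Hᵀ R⁻¹ H
  have hJJ : (fromRows S (-(T * H)))ᵀ * fromRows S (-(T * H))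
      = Sig⁻¹ + Hᵀ * R⁻¹ * H := by
    rw [transpose_fromRows, fromCols_mul_fromRows, hSS, transpose_neg, transpose_mul,
      Matrix.neg_mul, Matrix.mul_neg, neg_neg, Matrix.mul_assoc, ← Matrix.mul_assoc Tᵀ,
      hTT, ← Matrix.mul_assoc]
  -- positive definiteness of Σ⁻¹ + HᵀR⁻¹H
  have hHRH : (Hᵀ * R⁻¹ * H).PosSemidef := by
    simpa using hR.inv.posSemidef.conjTranspose_mul_mul_same H
  have hA : (Sig⁻¹ + Hᵀ * R⁻¹ * H).PosDef := hSig.inv.add_posSemidef hHRH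
  -- positive definiteness of HΣHᵀ + R
  have hP : (H * Sig * Hᵀ + R).PosDef := by
    have h := hSig.posSemidef.mul_mul_conjTranspose_same H
    exact Matrix.PosDef.posSemidef_add (by simpa using h) hR
  -- Woodbury
  have hW : (Sig⁻¹ + Hᵀ * R⁻¹ * H)⁻¹
      = Sig - Sig * Hᵀ * (H * Sig * Hᵀ + R)⁻¹ * H * Sig := by
    have hAC : IsUnit (R⁻¹⁻¹ + H * Sig⁻¹⁻¹ * Hᵀ) := by
      rw [hRInvInv, hSigInvInv]
      have : (R + H * Sig * Hᵀ).PosDef := by rwa [add_comm] at hP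
      exact this.isUnit
    have := Matrix.add_mul_mul_inv_eq_sub Sig⁻¹ Hᵀ R⁻¹ H hSig.inv.isUnit hR.inv.isUnit hAC
    rw [hRInvInv, hSigInvInv, add_comm R] at this
    exact this
  refine ⟨by rw [hJJ]; exact hA.isUnit, by rw [hJJ, hW], ?_⟩
  -- mean update
  have hJC : (fromRows S (-(T * H)))ᵀ *ᵥ Sum.elim (0 : Fin n → ℝ) (T *ᵥ r)
      = -((Hᵀ * R⁻¹) *ᵥ r) := by
    rw [transpose_fromRows, fromCols_mulVec_sumElim, mulVec_zero, zero_add,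
      transpose_neg, neg_mulVec, mulVec_mulVec, transpose_mul, Matrix.mul_assoc, hTT]
  have hKey : (Sig⁻¹ + Hᵀ * R⁻¹ * H)⁻¹ * (Hᵀ * R⁻¹)
      = Sig * Hᵀ * (H * Sig * Hᵀ + R)⁻¹ := by
    have hdetA := (isUnit_iff_isUnit_det _).1 hA.isUnit
    have hdetP := (isUnit_iff_isUnit_det _).1 hP.isUnit
    have hstep : (Sig⁻¹ + Hᵀ * R⁻¹ * H) * (Sig * Hᵀ * (H * Sig * Hᵀ + R)⁻¹)
        = Hᵀ * R⁻¹ := by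
      have h1 : (Sig⁻¹ + Hᵀ * R⁻¹ * H) * (Sig * Hᵀ)
          = Hᵀ * R⁻¹ * (H * Sig * Hᵀ + R) := by
        rw [Matrix.add_mul, Matrix.mul_add]
        rw [← Matrix.mul_assoc Sig⁻¹, Matrix.nonsing_inv_mul Sig
          ((isUnit_iff_isUnit_det _).1 hSig.isUnit), Matrix.one_mul]
        rw [Matrix.mul_assoc (Hᵀ * R⁻¹), Matrix.nonsing_inv_mul_cancel_right R Hᵀ
          ((isUnit_iff_isUnit_det _).1 hR.isUnit), add_comm]
        simp [Matrix.mul_assoc]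
      calc (Sig⁻¹ + Hᵀ * R⁻¹ * H) * (Sig * Hᵀ * (H * Sig * Hᵀ + R)⁻¹)
          = ((Sig⁻¹ + Hᵀ * R⁻¹ * H) * (Sig * Hᵀ)) * (H * Sig * Hᵀ + R)⁻¹ :=
            (Matrix.mul_assoc _ _ _).symm
        _ = Hᵀ * R⁻¹ * ((H * Sig * Hᵀ + R) * (H * Sig * Hᵀ + R)⁻¹) := by
            rw [h1, Matrix.mul_assoc]
        _ = Hᵀ * R⁻¹ := by rw [Matrix.mul_nonsing_inv _ hdetP, Matrix.mul_one]
    calc (Sig⁻¹ + Hᵀ * R⁻¹ * H)⁻¹ * (Hᵀ * R⁻¹)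
        = (Sig⁻¹ + Hᵀ * R⁻¹ * H)⁻¹ * ((Sig⁻¹ + Hᵀ * R⁻¹ * H)
            * (Sig * Hᵀ * (H * Sig * Hᵀ + R)⁻¹)) := by rw [hstep]
      _ = Sig * Hᵀ * (H * Sig * Hᵀ + R)⁻¹ := by
          rw [← Matrix.mul_assoc, Matrix.nonsing_inv_mul _ hdetA, Matrix.one_mul]
    
  rw [← mulVec_mulVec, hJC, mulVec_neg, sub_neg_eq_add, hJJ, mulVec_mulVec, hKey]
end

section
/- (MSCKF pose augmentation step equals a Gauss-Newton step.) Let Σ ∈ ℝ^{n×n} be symmetric positive definite, Ψ ∈ ℝ^{k×n}, ε > 0, and let S ∈ ℝ^{n×n} be invertible with SᵀS = Σ⁻¹. Define the block matrix J := fromBlocks(S, 0, −ε^{−1/2}Ψ, ε^{−1/2}I_k) ∈ ℝ^{(n+k)×(n+k)}. Then JᵀJ is invertible and (JᵀJ)⁻¹ = fromBlocks(Σ, ΣΨᵀ, ΨΣ, ΨΣΨᵀ + εI_k). In particular, as ε → 0 the bottom-right block tends to ΨΣΨᵀ, recovering the standard MSCKF state-augmentation covariance. -/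
open Matrix

/-- **MSCKF pose augmentation step equals a Gauss-Newton step.**
With the block Jacobian `J = fromBlocks(S, 0, −ε^{−1/2}Ψ, ε^{−1/2}I)`, where
`SᵀS = Σ⁻¹`, the Gauss-Newton covariance `(JᵀJ)⁻¹` equals
`fromBlocks(Σ, ΣΨᵀ, ΨΣ, ΨΣΨᵀ + εI)`, recovering (as `ε → 0`) the standard MSCKF
state-augmentation covariance. -/
theorem msckf_pose_augmentation_is_gauss_newton
    {n k : ℕ}
    (Sig : Matrix (Fin n) (Fin n) ℝ) (hSig : Sig.PosDef)
    (Psi : Matrix (Fin k) (Fin n) ℝ)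
    (ε : ℝ) (hε : 0 < ε)
    (S : Matrix (Fin n) (Fin n) ℝ) (hS : IsUnit S) (hSS : Sᵀ * S = Sig⁻¹)
    (J : Matrix (Fin n ⊕ Fin k) (Fin n ⊕ Fin k) ℝ)
    (hJ : J = fromBlocks S 0 (-((Real.sqrt ε)⁻¹ • Psi))
      ((Real.sqrt ε)⁻¹ • (1 : Matrix (Fin k) (Fin k) ℝ))) :
    IsUnit (Jᵀ * J) ∧
      (Jᵀ * J)⁻¹
        = fromBlocks Sig (Sig * Psiᵀ) (Psi * Sig)
            (Psi * Sig * Psiᵀ + ε • (1 : Matrix (Fin k) (Fin k) ℝ)) := by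
  have hcc : (Real.sqrt ε)⁻¹ * (Real.sqrt ε)⁻¹ = ε⁻¹ := by
    rw [← mul_inv, Real.mul_self_sqrt hε.le]
  have hSigInv : Sig⁻¹ * Sig = 1 := nonsing_inv_mul _ (isUnit_iff_ne_zero.mpr hSig.det_pos.ne')
  have hε0 : (ε : ℝ) ≠ 0 := hε.ne'
  have key : (Jᵀ * J) * fromBlocks Sig (Sig * Psiᵀ) (Psi * Sig)
      (Psi * Sig * Psiᵀ + ε • (1 : Matrix (Fin k) (Fin k) ℝ)) = 1 := by
    subst hJ
    rw [fromBlocks_transpose, fromBlocks_multiply, fromBlocks_multiply, ← fromBlocks_one]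
    simp [Matrix.mul_smul, Matrix.smul_mul, transpose_smul, mul_add, add_mul,
        smul_smul, hcc, hSS, hSigInv, Matrix.mul_assoc]
    have hX : (Sig⁻¹ + ε⁻¹ • (Psiᵀ * Psi)) * (Sig * Psiᵀ)
        + -(ε⁻¹ • (Psiᵀ * (Psi * (Sig * Psiᵀ) + ε • 1))) = 0 := by
      rw [Matrix.add_mul, Matrix.smul_mul, Matrix.mul_add, smul_add,
        ← Matrix.mul_assoc Sig⁻¹, hSigInv, Matrix.one_mul]
      simp [smul_smul, inv_mul_cancel₀ hε0, Matrix.mul_smul, Matrix.mul_assoc]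
      abel
    rw [hX, mul_inv_cancel₀ hε0, one_smul, fromBlocks_one]
  exact ⟨(Matrix.isUnit_iff_isUnit_det _).mpr (isUnit_det_of_right_inverse key), inv_eq_right_inv key⟩
end

section
/- (Weighted nullspace decomposition of the identity, MSCKF feature update.) Let R ∈ ℝ^{n×n} be symmetric positive definite and let S ∈ ℝ^{n×n} be symmetric positive definite with S² = R. Let H_f ∈ ℝ^{n×m} have full column rank, let A ∈ ℝ^{n×(n−m)} satisfy AᵀA = I_{n−m} and H_fᵀA = 0, and let Q ∈ ℝ^{(n−m)×(n−m)} be orthogonal (QᵀQ = I). Then S⁻¹ H_f (H_fᵀ R⁻¹ H_f)⁻¹ H_fᵀ S⁻¹ + S·AQ (QᵀAᵀ R AQ)⁻¹ QᵀAᵀ·S = I_n. -/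
open Matrix

/-- Gram matrix of a real matrix with injective `mulVec` is a unit. -/
lemma gram_isUnit {n p : ℕ} (B : Matrix (Fin n) (Fin p) ℝ)
    (hB : Function.Injective B.mulVec) : IsUnit (Bᵀ * B) := by
  rw [← Matrix.mulVec_injective_iff_isUnit]
  intro x y hxy
  have h0 : (Bᵀ * B) *ᵥ (x - y) = 0 := by
    rw [Matrix.mulVec_sub, hxy, sub_self]
  have h0' : Bᵀ *ᵥ (B *ᵥ (x - y)) = 0 := by
    rwa [Matrix.mulVec_mulVec]
  have h1 : (B *ᵥ (x - y)) ⬝ᵥ (B *ᵥ (x - y)) = 0 := by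
    calc (B *ᵥ (x - y)) ⬝ᵥ (B *ᵥ (x - y))
        = (x - y) ⬝ᵥ (Bᵀ *ᵥ (B *ᵥ (x - y))) := by
          simp only [Matrix.dotProduct_mulVec, Matrix.vecMul_transpose]
    _ = 0 := by rw [h0', dotProduct_zero]
  have h2 : B *ᵥ (x - y) = 0 := dotProduct_self_eq_zero.mp h1
  have h3 : x - y = 0 := hB (by simpa using h2)
  exact sub_eq_zero.mp h3

/-- The sum of the two complementary orthogonal projections is the identity. -/
lemma proj_sum_eq_one {n : ℕ} {α β : Type*} [Fintype α] [Fintype β]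
    [DecidableEq α] [DecidableEq β]
    (e : Fin n ≃ α ⊕ β) (U : Matrix (Fin n) α ℝ) (V : Matrix (Fin n) β ℝ)
    (hG1u : IsUnit (Uᵀ * U)) (hG2u : IsUnit (Vᵀ * V))
    (hUV : Uᵀ * V = 0) (hVU : Vᵀ * U = 0) :
    U * (Uᵀ * U)⁻¹ * Uᵀ + V * (Vᵀ * V)⁻¹ * Vᵀ = 1 := by
  have hd1 : IsUnit (Uᵀ * U).det := (Matrix.isUnit_iff_isUnit_det _).mp hG1u
  have hd2 : IsUnit (Vᵀ * V).det := (Matrix.isUnit_iff_isUnit_det _).mp hG2u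
  rw [Matrix.mul_assoc U, Matrix.mul_assoc V, ← Matrix.fromCols_mul_fromRows,
    Matrix.fromCols_mul_fromRows_eq_one_comm e, Matrix.fromRows_mul_fromCols,
    Matrix.mul_assoc _ Uᵀ U, Matrix.mul_assoc _ Uᵀ V, Matrix.mul_assoc _ Vᵀ U,
    Matrix.mul_assoc _ Vᵀ V, hUV, hVU, Matrix.mul_zero, Matrix.mul_zero,
    Matrix.nonsing_inv_mul _ hd1, Matrix.nonsing_inv_mul _ hd2]
  exact Matrix.fromBlocks_one

/-- **Weighted nullspace decomposition of the identity (MSCKF feature update).**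
For `R` symmetric positive definite with symmetric positive definite square root `S`
(`S² = R`), `H_f` of full column rank, `A` with orthonormal columns spanning
`N(H_fᵀ)` (`AᵀA = I`, `H_fᵀA = 0`), and `Q` orthogonal,
`S⁻¹H_f(H_fᵀR⁻¹H_f)⁻¹H_fᵀS⁻¹ + S·AQ(QᵀAᵀRAQ)⁻¹QᵀAᵀ·S = I`. -/
theorem weighted_nullspace_decomposition
    {n m : ℕ}
    (R S : Matrix (Fin n) (Fin n) ℝ)
    (hR : R.PosDef) (hS : S.PosDef) (hSR : S * S = R)
    (Hf : Matrix (Fin n) (Fin m) ℝ) (hHf : IsUnit (Hfᵀ * Hf))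
    (A : Matrix (Fin n) (Fin (n - m)) ℝ)
    (hA : Aᵀ * A = (1 : Matrix (Fin (n - m)) (Fin (n - m)) ℝ))
    (hHfA : Hfᵀ * A = 0)
    (Q : Matrix (Fin (n - m)) (Fin (n - m)) ℝ)
    (hQ : Qᵀ * Q = (1 : Matrix (Fin (n - m)) (Fin (n - m)) ℝ)) :
    S⁻¹ * Hf * (Hfᵀ * R⁻¹ * Hf)⁻¹ * Hfᵀ * S⁻¹
      + S * (A * Q) * (Qᵀ * Aᵀ * R * A * Q)⁻¹ * (Qᵀ * Aᵀ) * S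
      = (1 : Matrix (Fin n) (Fin n) ℝ) := by
  have hSu : IsUnit S := hS.isUnit
  have hSdet : IsUnit S.det := (Matrix.isUnit_iff_isUnit_det S).mp hSu
  have hSt : Sᵀ = S := by
    have := hS.isHermitian
    simpa [Matrix.IsHermitian] using this
  have hSinvt : (S⁻¹)ᵀ = S⁻¹ := by rw [Matrix.transpose_nonsing_inv, hSt]
  have hRinv : R⁻¹ = S⁻¹ * S⁻¹ := by rw [← hSR, Matrix.mul_inv_rev]
  -- injectivity of mulVec maps
  have hHfinj : Function.Injective Hf.mulVec := by
    intro x y hxy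
    have h1 : (Hfᵀ * Hf) *ᵥ x = (Hfᵀ * Hf) *ᵥ y := by
      rw [← Matrix.mulVec_mulVec, ← Matrix.mulVec_mulVec, hxy]
    exact (Matrix.mulVec_injective_iff_isUnit.mpr hHf) h1
  have hSinvinj : Function.Injective (S⁻¹).mulVec :=
    Matrix.mulVec_injective_iff_isUnit.mpr (Matrix.isUnit_nonsing_inv_iff.mpr hSu)
  have hSinj : Function.Injective S.mulVec :=
    Matrix.mulVec_injective_iff_isUnit.mpr hSu
  have hAinj : Function.Injective A.mulVec := by
    intro x y hxy
    have h1 : (Aᵀ * A) *ᵥ x = (Aᵀ * A) *ᵥ y := by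
      rw [← Matrix.mulVec_mulVec, ← Matrix.mulVec_mulVec, hxy]
    simpa [hA] using h1
  have hQinj : Function.Injective Q.mulVec := by
    intro x y hxy
    have h1 : (Qᵀ * Q) *ᵥ x = (Qᵀ * Q) *ᵥ y := by
      rw [← Matrix.mulVec_mulVec, ← Matrix.mulVec_mulVec, hxy]
    simpa [hQ] using h1
  have hUinj : Function.Injective (S⁻¹ * Hf).mulVec := by
    intro x y hxy
    rw [← Matrix.mulVec_mulVec, ← Matrix.mulVec_mulVec] at hxy
    exact hHfinj (hSinvinj hxy)
  have hVinj : Function.Injective (S * (A * Q)).mulVec := by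
    intro x y hxy
    rw [← Matrix.mulVec_mulVec, ← Matrix.mulVec_mulVec,
      ← Matrix.mulVec_mulVec, ← Matrix.mulVec_mulVec] at hxy
    exact hQinj (hAinj (hSinj hxy))
  have hG1u : IsUnit ((S⁻¹ * Hf)ᵀ * (S⁻¹ * Hf)) := gram_isUnit _ hUinj
  have hG2u : IsUnit ((S * (A * Q))ᵀ * (S * (A * Q))) := gram_isUnit _ hVinj
  -- orthogonality of the two column spaces
  have hUV : (S⁻¹ * Hf)ᵀ * (S * (A * Q)) = 0 := by
    rw [Matrix.transpose_mul, hSinvt, Matrix.mul_assoc, ← Matrix.mul_assoc S⁻¹,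
      Matrix.nonsing_inv_mul S hSdet, Matrix.one_mul, ← Matrix.mul_assoc, hHfA,
      Matrix.zero_mul]
  have hVU : (S * (A * Q))ᵀ * (S⁻¹ * Hf) = 0 := by
    have := congrArg Matrix.transpose hUV
    simpa using this
  -- dimension: m ≤ n
  have hmn : m ≤ n := by
    have h1 : (Hfᵀ * Hf).rank = m := by
      simpa using Matrix.rank_of_isUnit _ hHf
    have h2 : (Hfᵀ * Hf).rank ≤ n := by
      calc (Hfᵀ * Hf).rank ≤ Hfᵀ.rank := Matrix.rank_mul_le_left _ _
      _ ≤ n := by simpa using Hfᵀ.rank_le_width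
    omega
  have e : Fin n ≃ Fin m ⊕ Fin (n - m) :=
    (finCongr (by omega : n = m + (n - m))).trans finSumFinEquiv.symm
  have key := proj_sum_eq_one e (S⁻¹ * Hf) (S * (A * Q)) hG1u hG2u hUV hVU
  have e1 : Hfᵀ * R⁻¹ * Hf = (S⁻¹ * Hf)ᵀ * (S⁻¹ * Hf) := by
    rw [Matrix.transpose_mul, hSinvt, hRinv]
    simp [Matrix.mul_assoc]
  have e2 : Qᵀ * Aᵀ * R * A * Q = (S * (A * Q))ᵀ * (S * (A * Q)) := by
    rw [Matrix.transpose_mul, Matrix.transpose_mul, hSt, ← hSR]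
    simp [Matrix.mul_assoc]
  rw [e1, e2]
  simpa only [Matrix.transpose_mul, hSinvt, hSt, Matrix.mul_assoc] using key
end

section
/- Let R ∈ ℝ^{n×n} be symmetric positive definite, let H_f ∈ ℝ^{n×m} have full column rank, let A ∈ ℝ^{n×(n−m)} satisfy AᵀA = I_{n−m} and H_fᵀA = 0, and let Q ∈ ℝ^{(n−m)×(n−m)} be orthogonal. Then AQ (QᵀAᵀ R AQ)⁻¹ QᵀAᵀ = R⁻¹ − R⁻¹ H_f (H_fᵀ R⁻¹ H_f)⁻¹ H_fᵀ R⁻¹. (This shows the nullspace-projected MSCKF update information Tᵀ(QᵀAᵀRAQ)⁻¹T, with T := QᵀAᵀH_x, coincides with the Schur-complement expression produced by marginalizing the features.) -/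
open Matrix

lemma posDef_conj_t {n k : Type*} [Fintype n] [Fintype k] [DecidableEq k]
    {M : Matrix n n ℝ} (hM : M.PosDef) (B : Matrix n k ℝ)
    (hB : ∀ x, B *ᵥ x = 0 → x = 0) : (Bᵀ * M * B).PosDef := by
  rw [Matrix.posDef_iff_dotProduct_mulVec]
  constructor
  · have := Matrix.isHermitian_conjTranspose_mul_mul B hM.isHermitian
    simpa using this
  · intro x hx
    have hBx : B *ᵥ x ≠ 0 := fun h => hx (hB x h)
    have := hM.dotProduct_mulVec_pos hBx
    simpa [Matrix.mul_assoc, ← Matrix.mulVec_mulVec, Matrix.dotProduct_mulVec,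
      Matrix.vecMul_transpose] using this

lemma ker_eq_range {n m : ℕ}
    (Hf : Matrix (Fin n) (Fin m) ℝ) (hHf : IsUnit (Hfᵀ * Hf))
    (A : Matrix (Fin n) (Fin (n - m)) ℝ)
    (hAinj : Function.Injective (A.mulVecLin))
    (hHfA : Hfᵀ * A = 0) (v : Fin n → ℝ) (hv : Hfᵀ *ᵥ v = 0) :
    ∃ c, A *ᵥ c = v := by
  have hrankHf : Hf.rank = m := by
    have h1 : (Hfᵀ * Hf).rank = m := by
      simpa using Matrix.rank_of_isUnit _ hHf
    have h2 := Matrix.rank_transpose_mul_self Hf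
    omega
  have hmn : m ≤ n := by
    have := Hf.rank_le_card_height
    simpa [hrankHf] using this
  have hle : LinearMap.range A.mulVecLin ≤ LinearMap.ker (Hfᵀ).mulVecLin := by
    rintro x ⟨y, rfl⟩
    simp only [LinearMap.mem_ker, mulVecLin_apply, mulVec_mulVec, hHfA, zero_mulVec]
  have hker : Module.finrank ℝ (LinearMap.ker (Hfᵀ).mulVecLin) = n - m := by
    have h3 := LinearMap.finrank_range_add_finrank_ker (Hfᵀ).mulVecLin
    have h4 : Module.finrank ℝ (LinearMap.range (Hfᵀ).mulVecLin) = m := by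
      have : Hfᵀ.rank = m := by rw [Matrix.rank_transpose, hrankHf]
      simpa [Matrix.rank] using this
    simp [Module.finrank_fintype_fun_eq_card] at h3
    omega
  have hrange : Module.finrank ℝ (LinearMap.range A.mulVecLin) = n - m := by
    rw [LinearMap.finrank_range_of_inj hAinj]
    simp [Module.finrank_fintype_fun_eq_card]
  have heq : LinearMap.range A.mulVecLin = LinearMap.ker (Hfᵀ).mulVecLin :=
    Submodule.eq_of_le_of_finrank_eq hle (by rw [hker, hrange])
  have : v ∈ LinearMap.ker (Hfᵀ).mulVecLin := by
    rw [LinearMap.mem_ker, mulVecLin_apply]; exact hv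
  rw [← heq] at this
  obtain ⟨c, hc⟩ := this
  exact ⟨c, hc⟩

/-- **Nullspace-projected MSCKF update equals the Schur-complement expression.**
For `R` symmetric positive definite, `H_f` of full column rank, `A` with
orthonormal columns spanning `N(H_fᵀ)` and `Q` orthogonal,
`AQ(QᵀAᵀRAQ)⁻¹QᵀAᵀ = R⁻¹ − R⁻¹H_f(H_fᵀR⁻¹H_f)⁻¹H_fᵀR⁻¹`. -/
theorem nullspace_projection_schur_complement
    {n m : ℕ}
    (R : Matrix (Fin n) (Fin n) ℝ) (hR : R.PosDef)
    (Hf : Matrix (Fin n) (Fin m) ℝ) (hHf : IsUnit (Hfᵀ * Hf))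
    (A : Matrix (Fin n) (Fin (n - m)) ℝ)
    (hA : Aᵀ * A = (1 : Matrix (Fin (n - m)) (Fin (n - m)) ℝ))
    (hHfA : Hfᵀ * A = 0)
    (Q : Matrix (Fin (n - m)) (Fin (n - m)) ℝ)
    (hQ : Qᵀ * Q = (1 : Matrix (Fin (n - m)) (Fin (n - m)) ℝ)) :
    (A * Q) * (Qᵀ * Aᵀ * R * A * Q)⁻¹ * (Qᵀ * Aᵀ)
      = R⁻¹ - R⁻¹ * Hf * (Hfᵀ * R⁻¹ * Hf)⁻¹ * Hfᵀ * R⁻¹ := by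
  -- basic invertibility facts
  have hRdet : IsUnit R.det := hR.det_pos.ne'.isUnit
  have hRR : R * R⁻¹ = 1 := Matrix.mul_nonsing_inv R hRdet
  have hRR' : R⁻¹ * R = 1 := Matrix.nonsing_inv_mul R hRdet
  -- injectivity of A and Hf
  have hAinj0 : ∀ x, A *ᵥ x = 0 → x = 0 := by
    intro x hx
    have : (Aᵀ * A) *ᵥ x = Aᵀ *ᵥ (A *ᵥ x) := (Matrix.mulVec_mulVec ..).symm
    rw [hA, Matrix.one_mulVec, hx, Matrix.mulVec_zero] at this
    exact this
  have hHfdet : IsUnit (Hfᵀ * Hf).det := (Matrix.isUnit_iff_isUnit_det _).mp hHf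
  have hHfinj0 : ∀ x, Hf *ᵥ x = 0 → x = 0 := by
    intro x hx
    have h1 : (Hfᵀ * Hf) *ᵥ x = 0 := by
      rw [← Matrix.mulVec_mulVec, hx, Matrix.mulVec_zero]
    have h2 := congrArg (fun y => (Hfᵀ * Hf)⁻¹ *ᵥ y) h1
    simpa [Matrix.mulVec_mulVec, Matrix.nonsing_inv_mul _ hHfdet] using h2
  -- positive definiteness of the two Gram matrices
  have hN : (Aᵀ * R * A).PosDef := posDef_conj_t hR A hAinj0
  have hS : (Hfᵀ * R⁻¹ * Hf).PosDef := posDef_conj_t hR.inv Hf hHfinj0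
  have hNdet : IsUnit (Aᵀ * R * A).det := hN.det_pos.ne'.isUnit
  have hSdet : IsUnit (Hfᵀ * R⁻¹ * Hf).det := hS.det_pos.ne'.isUnit
  have hNN : (Aᵀ * R * A) * (Aᵀ * R * A)⁻¹ = 1 := Matrix.mul_nonsing_inv _ hNdet
  have hNN' : (Aᵀ * R * A)⁻¹ * (Aᵀ * R * A) = 1 := Matrix.nonsing_inv_mul _ hNdet
  have hSS : (Hfᵀ * R⁻¹ * Hf) * (Hfᵀ * R⁻¹ * Hf)⁻¹ = 1 := Matrix.mul_nonsing_inv _ hSdet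
  have hSS' : (Hfᵀ * R⁻¹ * Hf)⁻¹ * (Hfᵀ * R⁻¹ * Hf) = 1 := Matrix.nonsing_inv_mul _ hSdet
  -- right-associated rewriting helpers
  have hAmid : ∀ {p : Type} [Fintype p] (X : Matrix (Fin (n - m)) p ℝ),
      (Aᵀ * (R * A))⁻¹ * (Aᵀ * (R * (A * X))) = X := by
    intro p _ X
    rw [show Aᵀ * (R * (A * X)) = (Aᵀ * R * A) * X by simp [Matrix.mul_assoc],
      ← Matrix.mul_assoc (Aᵀ * (R * A))⁻¹, ← Matrix.mul_assoc Aᵀ R A, hNN', Matrix.one_mul]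
  have hSmid : ∀ {p : Type} [Fintype p] (X : Matrix (Fin m) p ℝ),
      (Hfᵀ * (R⁻¹ * Hf))⁻¹ * (Hfᵀ * (R⁻¹ * (Hf * X))) = X := by
    intro p _ X
    rw [show Hfᵀ * (R⁻¹ * (Hf * X)) = (Hfᵀ * R⁻¹ * Hf) * X by simp [Matrix.mul_assoc],
      ← Matrix.mul_assoc (Hfᵀ * (R⁻¹ * Hf))⁻¹, ← Matrix.mul_assoc Hfᵀ R⁻¹ Hf, hSS', Matrix.one_mul]
  have hRmid : ∀ {p : Type} [Fintype p] (X : Matrix (Fin n) p ℝ),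
      R * (R⁻¹ * X) = X := by
    intro p _ X; rw [← Matrix.mul_assoc, hRR, Matrix.one_mul]
  have hHfA0 : ∀ {p : Type} [Fintype p] (X : Matrix (Fin (n - m)) p ℝ),
      Hfᵀ * (A * X) = 0 := by
    intro p _ X; rw [← Matrix.mul_assoc, hHfA, Matrix.zero_mul]
  have hAT : Aᵀ * Hf = 0 := by
    have := congrArg Matrix.transpose hHfA
    simpa using this
  have hAHf0 : ∀ {p : Type} [Fintype p] (X : Matrix (Fin m) p ℝ),
      Aᵀ * (Hf * X) = 0 := by
    intro p _ X; rw [← Matrix.mul_assoc, hAT, Matrix.zero_mul]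
  -- the two projections
  set PA : Matrix (Fin n) (Fin n) ℝ := A * (Aᵀ * R * A)⁻¹ * Aᵀ * R with hPAdef
  set PH : Matrix (Fin n) (Fin n) ℝ := R⁻¹ * Hf * (Hfᵀ * R⁻¹ * Hf)⁻¹ * Hfᵀ with hPHdef
  have hPA2 : PA * PA = PA := by
    rw [hPAdef]; simp only [Matrix.mul_assoc, hAmid]
  have hPH2 : PH * PH = PH := by
    rw [hPHdef]; simp only [Matrix.mul_assoc, hSmid]
  have hPAPH : PA * PH = 0 := by
    rw [hPAdef, hPHdef]
    simp only [Matrix.mul_assoc, hRmid, hAHf0, Matrix.mul_zero]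
  have hPHPA : PH * PA = 0 := by
    rw [hPAdef, hPHdef]
    simp only [Matrix.mul_assoc, hHfA0, Matrix.mul_zero]
  set P : Matrix (Fin n) (Fin n) ℝ := PA + PH with hPdef
  have hPAP : PA * P = PA := by rw [hPdef, Matrix.mul_add, hPA2, hPAPH, add_zero]
  have hPHP : PH * P = PH := by rw [hPdef, Matrix.mul_add, hPH2, hPHPA, zero_add]
  have hPP : P * P = P := by
    rw [hPdef, Matrix.add_mul, ← hPdef, hPAP, hPHP]
  -- P is injective as a linear map
  have hPinj : ∀ v, P *ᵥ v = 0 → v = 0 := by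
    intro v hv
    have hPAv : PA *ᵥ v = 0 := by
      have := congrArg (fun y => PA *ᵥ y) hv
      simpa [Matrix.mulVec_mulVec, hPAP] using this
    have hPHv : PH *ᵥ v = 0 := by
      have := congrArg (fun y => PH *ᵥ y) hv
      simpa [Matrix.mulVec_mulVec, hPHP] using this
    -- from PA v = 0 : Aᵀ R v = 0
    have hARv : (Aᵀ * R) *ᵥ v = 0 := by
      have h1 : A *ᵥ (((Aᵀ * R * A)⁻¹ * (Aᵀ * R)) *ᵥ v) = 0 := by
        rw [Matrix.mulVec_mulVec]
        rw [show A * ((Aᵀ * R * A)⁻¹ * (Aᵀ * R)) = PA by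
          rw [hPAdef]; simp [Matrix.mul_assoc]]
        exact hPAv
      have h2 : ((Aᵀ * R * A)⁻¹ * (Aᵀ * R)) *ᵥ v = 0 := hAinj0 _ h1
      have h3 := congrArg (fun y => (Aᵀ * R * A) *ᵥ y) h2
      simpa [Matrix.mulVec_mulVec, ← Matrix.mul_assoc, hNN] using h3
    -- from PH v = 0 : Hfᵀ v = 0
    have hHfv : Hfᵀ *ᵥ v = 0 := by
      have h1 : R⁻¹ *ᵥ ((Hf * ((Hfᵀ * R⁻¹ * Hf)⁻¹ * Hfᵀ)) *ᵥ v) = 0 := by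
        rw [Matrix.mulVec_mulVec]
        rw [show R⁻¹ * (Hf * ((Hfᵀ * R⁻¹ * Hf)⁻¹ * Hfᵀ)) = PH by
          rw [hPHdef]; simp [Matrix.mul_assoc]]
        exact hPHv
      have h2 : (Hf * ((Hfᵀ * R⁻¹ * Hf)⁻¹ * Hfᵀ)) *ᵥ v = 0 := by
        have := congrArg (fun y => R *ᵥ y) h1
        simpa [Matrix.mulVec_mulVec, ← Matrix.mul_assoc, hRR] using this
      have h3 : ((Hfᵀ * R⁻¹ * Hf)⁻¹ * Hfᵀ) *ᵥ v = 0 := by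
        apply hHfinj0
        rw [Matrix.mulVec_mulVec]
        exact h2
      have h4 := congrArg (fun y => (Hfᵀ * R⁻¹ * Hf) *ᵥ y) h3
      simpa [Matrix.mulVec_mulVec, ← Matrix.mul_assoc, hSS] using h4
    -- hence v ∈ range A, and then v = 0
    have hAinj : Function.Injective A.mulVecLin := by
      intro x y hxy
      simp only [Matrix.mulVecLin_apply] at hxy
      have h : A *ᵥ (x - y) = 0 := by rw [Matrix.mulVec_sub, hxy, sub_self]
      exact sub_eq_zero.mp (hAinj0 _ h)
    obtain ⟨c, hc⟩ := ker_eq_range Hf hHf A hAinj hHfA v hHfv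
    have hNc : (Aᵀ * R * A) *ᵥ c = 0 := by
      rw [Matrix.mul_assoc, ← Matrix.mulVec_mulVec, ← Matrix.mulVec_mulVec, hc,
        Matrix.mulVec_mulVec]
      exact hARv
    have hc0 : c = 0 := by
      have := congrArg (fun y => (Aᵀ * R * A)⁻¹ *ᵥ y) hNc
      simpa [Matrix.mulVec_mulVec, hNN'] using this
    rw [← hc, hc0, Matrix.mulVec_zero]
  -- P is a unit, hence P = 1
  have hPunit : IsUnit P := by
    rw [← Matrix.mulVec_injective_iff_isUnit]
    intro x y hxy
    have h : P *ᵥ (x - y) = 0 := by rw [Matrix.mulVec_sub, hxy, sub_self]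
    exact sub_eq_zero.mp (hPinj _ h)
  have hPone : P = 1 := by
    have hPdet' : IsUnit P.det := (Matrix.isUnit_iff_isUnit_det _).mp hPunit
    calc P = (P⁻¹ * P) * P := by rw [Matrix.nonsing_inv_mul _ hPdet', Matrix.one_mul]
    _ = P⁻¹ * (P * P) := by rw [Matrix.mul_assoc]
    _ = P⁻¹ * P := by rw [hPP]
    _ = 1 := Matrix.nonsing_inv_mul _ hPdet'
  -- key identity
  have hkey : A * (Aᵀ * R * A)⁻¹ * Aᵀ
      = R⁻¹ - R⁻¹ * Hf * (Hfᵀ * R⁻¹ * Hf)⁻¹ * Hfᵀ * R⁻¹ := by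
    have h1 : PA = 1 - PH := by rw [← hPone, hPdef]; abel
    have h2 := congrArg (fun X => X * R⁻¹) h1
    rw [hPAdef, hPHdef] at h2
    calc A * (Aᵀ * R * A)⁻¹ * Aᵀ
        = A * (Aᵀ * R * A)⁻¹ * Aᵀ * R * R⁻¹ := by
          rw [Matrix.mul_assoc (A * (Aᵀ * R * A)⁻¹ * Aᵀ) R R⁻¹, hRR, Matrix.mul_one]
      _ = (1 - R⁻¹ * Hf * (Hfᵀ * R⁻¹ * Hf)⁻¹ * Hfᵀ) * R⁻¹ := h2
      _ = R⁻¹ - R⁻¹ * Hf * (Hfᵀ * R⁻¹ * Hf)⁻¹ * Hfᵀ * R⁻¹ := by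
          rw [Matrix.sub_mul, Matrix.one_mul]
  -- reduce the LHS using orthogonality of Q
  have hQQT : Q * Qᵀ = 1 := mul_eq_one_comm.mp hQ
  have hQinv : Q⁻¹ = Qᵀ := Matrix.inv_eq_left_inv hQ
  have hQTinv : (Qᵀ)⁻¹ = Q := Matrix.inv_eq_left_inv hQQT
  have hQc : ∀ {p : Type} [Fintype p] (X : Matrix (Fin (n - m)) p ℝ),
      Q * (Qᵀ * X) = X := by
    intro p _ X; rw [← Matrix.mul_assoc, hQQT, Matrix.one_mul]
  have hmid : Qᵀ * Aᵀ * R * A * Q = Qᵀ * ((Aᵀ * R * A) * Q) := by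
    simp [Matrix.mul_assoc]
  rw [hmid, Matrix.mul_inv_rev, Matrix.mul_inv_rev, hQinv, hQTinv]
  rw [← hkey]
  simp only [Matrix.mul_assoc, hQc]
end

section
/- (State propagation as marginalization: block matrix identity.) Let Σ̄ = fromBlocks(Σ_xx, Σ_xf, Σ_fx, Σ_ff) ∈ ℝ^{(d+p)×(d+p)} be symmetric positive definite with Σ_xx ∈ ℝ^{d×d}, and let Ω := Σ̄⁻¹ have the corresponding block decomposition Ω = fromBlocks(Ω_xx, Ω_xf, Ω_fx, Ω_ff). Let G ∈ ℝ^{d×d} be arbitrary and let Σ_w ∈ ℝ^{d×d} be symmetric positive definite. Then Ω_xx + GᵀΣ_w⁻¹G is invertible, and the matrix M := fromBlocks(Σ_w⁻¹, 0, 0, Ω_ff) − N·(Ω_xx + GᵀΣ_w⁻¹G)⁻¹·N′, where N ∈ ℝ^{(d+p)×d} is the vertical block [−Σ_w⁻¹G ; Ω_fx] and N′ ∈ ℝ^{d×(d+p)} is the horizontal block [−GᵀΣ_w⁻¹ Ω_xf], is invertible with M⁻¹ = fromBlocks(G Σ_xx Gᵀ + Σ_w, G Σ_xf, Σ_fx Gᵀ,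 Σ_ff). (This is exactly the EKF/MSCKF covariance propagation formula.) -/
/-!
With `W = Σ_w⁻¹` and `A = Ω_xx + GᵀWG`, the first block row of `ΩΣ̄ = 1` gives
`N′ Σ′ = -A [Σ_xx Gᵀ  Σ_xf]` for the claimed inverse `Σ′`. Hence
`M Σ′ = diag(W, Ω_ff) Σ′ + N [Σ_xx Gᵀ  Σ_xf]`, which is `1` by the second block row.
Probabilistically, `M` is the precision of `(Gx + w, f)` obtained by marginalizing `x` out of the
joint precision of `(x, Gx + w, f)`, and `Σ′` is its covariance.
-/

open Matrix

namespace Matrix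

variable {R : Type*} [Ring R] {n m k : Type*} [Fintype n] [Fintype m] [Fintype k]
  {Sxx : Matrix n n R} {Sxf : Matrix n k R} {Sfx : Matrix k n R} {Sff : Matrix k k R}
  {Oxx : Matrix n n R} {Oxf : Matrix n k R} {Ofx : Matrix k n R} {Off : Matrix k k R}
  {G : Matrix m n R} {Sw W : Matrix m m R}

variable (Sxx Sxf Sfx Sff G Sw) in
def propagatedCov : Matrix (m ⊕ k) (m ⊕ k) R :=
  fromBlocks (G * Sxx * Gᵀ + Sw) (G * Sxf) (Sfx * Gᵀ) Sff

variable (Oxf Ofx Off G W) in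
/-- `B` stands for `(Oxx + Gᵀ * W * G)⁻¹`. -/
def marginalPrecision (B : Matrix n n R) : Matrix (m ⊕ k) (m ⊕ k) R :=
  fromBlocks W 0 0 Off - fromRows (-(W * G)) Ofx * B * fromCols (-(Gᵀ * W)) Oxf

theorem fromCols_mul_propagatedCov [DecidableEq n] [DecidableEq m] (hW : W * Sw = 1)
    (h₁ : Oxx * Sxx + Oxf * Sfx = 1) (h₂ : Oxx * Sxf + Oxf * Sff = 0) :
    fromCols (-(Gᵀ * W)) Oxf * propagatedCov Sxx Sxf Sfx Sff G Sw =
      -((Oxx + Gᵀ * W * G) * fromCols (Sxx * Gᵀ) Sxf) := by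
  have h₁' : Oxf * Sfx = 1 - Oxx * Sxx := eq_sub_of_add_eq' h₁
  have h₂' : Oxf * Sff = -(Oxx * Sxf) := eq_neg_of_add_eq_zero_right h₂
  rw [propagatedCov, fromCols_mul_fromBlocks, mul_fromCols, fromCols_neg]
  congr 1
  · rw [← Matrix.mul_assoc Oxf, h₁']
    simp only [Matrix.mul_add, Matrix.add_mul, Matrix.sub_mul, Matrix.neg_mul, Matrix.mul_assoc,
      hW, Matrix.one_mul, Matrix.mul_one]
    abel
  · simp only [h₂', Matrix.add_mul, Matrix.neg_mul, Matrix.mul_assoc]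
    abel

theorem fromBlocks_mul_propagatedCov_add [DecidableEq m] [DecidableEq k] (hW : W * Sw = 1)
    (h₃ : Ofx * Sxx + Off * Sfx = 0) (h₄ : Ofx * Sxf + Off * Sff = 1) :
    fromBlocks W 0 0 Off * propagatedCov Sxx Sxf Sfx Sff G Sw +
      fromRows (-(W * G)) Ofx * fromCols (Sxx * Gᵀ) Sxf = 1 := by
  rw [propagatedCov, fromBlocks_multiply, fromRows_mul_fromCols, fromBlocks_add, ← fromBlocks_one]
  congr 1
  · simp only [Matrix.mul_add, Matrix.neg_mul, Matrix.mul_assoc, hW, Matrix.zero_mul, add_zero]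
    abel
  · simp only [Matrix.neg_mul, Matrix.mul_assoc, Matrix.zero_mul, add_zero]
    abel
  · rw [Matrix.zero_mul, zero_add, ← Matrix.mul_assoc, ← Matrix.mul_assoc, add_comm,
      ← Matrix.add_mul, h₃, Matrix.zero_mul]
  · rw [Matrix.zero_mul, zero_add, add_comm, h₄]

theorem marginalPrecision_mul_propagatedCov [DecidableEq n] [DecidableEq m] [DecidableEq k]
    (hΩ : fromBlocks Oxx Oxf Ofx Off * fromBlocks Sxx Sxf Sfx Sff = 1) (hW : W * Sw = 1)
    {B : Matrix n n R} (hB : B * (Oxx + Gᵀ * W * G) = 1) :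
    marginalPrecision Oxf Ofx Off G W B * propagatedCov Sxx Sxf Sfx Sff G Sw = 1 := by
  rw [fromBlocks_multiply, ← fromBlocks_one, fromBlocks_inj] at hΩ
  obtain ⟨h₁, h₂, h₃, h₄⟩ := hΩ
  calc marginalPrecision Oxf Ofx Off G W B * propagatedCov Sxx Sxf Sfx Sff G Sw
      = fromBlocks W 0 0 Off * propagatedCov Sxx Sxf Sfx Sff G Sw - fromRows (-(W * G)) Ofx *
          (B * (fromCols (-(Gᵀ * W)) Oxf * propagatedCov Sxx Sxf Sfx Sff G Sw)) := by
        rw [marginalPrecision, Matrix.sub_mul, Matrix.mul_assoc, Matrix.mul_assoc]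
    _ = fromBlocks W 0 0 Off * propagatedCov Sxx Sxf Sfx Sff G Sw +
          fromRows (-(W * G)) Ofx * fromCols (Sxx * Gᵀ) Sxf := by
        rw [fromCols_mul_propagatedCov hW h₁ h₂, Matrix.mul_neg, ← Matrix.mul_assoc, hB,
          Matrix.one_mul, Matrix.mul_neg, sub_neg_eq_add]
    _ = 1 := fromBlocks_mul_propagatedCov_add hW h₃ h₄

end Matrix

/-- **State propagation as marginalization: block matrix identity.**
Let `Σ̄ = fromBlocks(Σ_xx, Σ_xf, Σ_fx, Σ_ff)` be symmetric positive definite with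
inverse blocks `Ω = fromBlocks(Ω_xx, Ω_xf, Ω_fx, Ω_ff)`, let `G` be arbitrary and
`Σ_w` symmetric positive definite. Then `Ω_xx + GᵀΣ_w⁻¹G` is invertible, and
`M := fromBlocks(Σ_w⁻¹, 0, 0, Ω_ff) − N(Ω_xx + GᵀΣ_w⁻¹G)⁻¹N′` is invertible with
`M⁻¹ = fromBlocks(GΣ_xxGᵀ + Σ_w, GΣ_xf, Σ_fxGᵀ, Σ_ff)`. -/
theorem state_propagation_marginalization_identity
    {d p : ℕ}
    (Sigxx : Matrix (Fin d) (Fin d) ℝ) (Sigxf : Matrix (Fin d) (Fin p) ℝ)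
    (Sigfx : Matrix (Fin p) (Fin d) ℝ) (Sigff : Matrix (Fin p) (Fin p) ℝ)
    (hSigbar : (fromBlocks Sigxx Sigxf Sigfx Sigff).PosDef)
    (Omxx : Matrix (Fin d) (Fin d) ℝ) (Omxf : Matrix (Fin d) (Fin p) ℝ)
    (Omfx : Matrix (Fin p) (Fin d) ℝ) (Omff : Matrix (Fin p) (Fin p) ℝ)
    (hOm : (fromBlocks Sigxx Sigxf Sigfx Sigff)⁻¹ = fromBlocks Omxx Omxf Omfx Omff)
    (G : Matrix (Fin d) (Fin d) ℝ)
    (Sigw : Matrix (Fin d) (Fin d) ℝ) (hSigw : Sigw.PosDef)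
    (N : Matrix (Fin d ⊕ Fin p) (Fin d) ℝ)
    (hN : N = fromRows (-(Sigw⁻¹ * G)) Omfx)
    (N' : Matrix (Fin d) (Fin d ⊕ Fin p) ℝ)
    (hN' : N' = fromCols (-(Gᵀ * Sigw⁻¹)) Omxf)
    (M : Matrix (Fin d ⊕ Fin p) (Fin d ⊕ Fin p) ℝ)
    (hM : M = fromBlocks Sigw⁻¹ 0 0 Omff
      - N * (Omxx + Gᵀ * Sigw⁻¹ * G)⁻¹ * N') :
    IsUnit (Omxx + Gᵀ * Sigw⁻¹ * G) ∧
    IsUnit M ∧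
    M⁻¹ = fromBlocks (G * Sigxx * Gᵀ + Sigw) (G * Sigxf) (Sigfx * Gᵀ) Sigff := by
  have hΩ : fromBlocks Omxx Omxf Omfx Omff * fromBlocks Sigxx Sigxf Sigfx Sigff = 1 :=
    hOm ▸ nonsing_inv_mul _ hSigbar.det_pos.ne'.isUnit
  have hOmxx : Omxx.PosDef := (hOm ▸ hSigbar.inv).submatrix Sum.inl_injective
  have hA : (Omxx + Gᵀ * Sigw⁻¹ * G).PosDef :=
    hOmxx.add_posSemidef (by simpa using hSigw.inv.posSemidef.conjTranspose_mul_mul_same G)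
  have hMP : M * propagatedCov Sigxx Sigxf Sigfx Sigff G Sigw = 1 := by
    subst hM hN hN'
    exact marginalPrecision_mul_propagatedCov hΩ (nonsing_inv_mul _ hSigw.det_pos.ne'.isUnit)
      (nonsing_inv_mul _ hA.det_pos.ne'.isUnit)
  exact ⟨hA.isUnit, .of_mul_eq_one _ hMP, inv_eq_right_inv hMP⟩
end
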